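/- arXiv:1403.3389 — 7 statements merged into one kernel-verified Lean document; each statement's English description precedes it below -/
import Mathlib

section
/- Let X₁,...,Xₙ be compact metric spaces and c : X₁ × ⋯ × Xₙ → ℝ a continuous cost function that is continuously differentiable with respect to its first variable (X₁ a compact subset of ℝᵈ). Let S ⊆ X₁ × ⋯ × Xₙ be a compact c-splitting set. If c is locally 1-twisted on S (i.e., for every point (x̄₁,...,x̄ₙ) ∈ S there is a neighborhood U of (x̄₁,...,x̄ₙ) such that no other point (x̄₁, x₂,...,xₙ) ∈ S ∩ U with the same first coordinate satisfies D₁c(x̄₁,x₂,...,xₙ) = D₁c(x̄₁,x̄₂,...,x̄ₙ)), then for every (x̄₁,...,x̄ₙ) ∈ S the set {(x̄₁,x₂,...,xₙ) ∈ S : D₁c(x̄₁,x₂,...,xₙ) = D₁c(x̄₁,x̄₂,...,x̄ₙ)} is finite. -/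
/-!
The set of second coordinates in question is compact: it is a slice of the compact set `S`
cut down by a closed level set of the continuous map `D₁c x̄₁`. The local twist condition
says precisely that each of its points is isolated in it, and a compact set all of whose
points are isolated is finite.
-/

open Set Filter Topology

section Twist

variable {X Y Z : Type*} [TopologicalSpace X] [TopologicalSpace Y]

def LocallyTwistedOn (f : X → Y → Z) (S : Set (X × Y)) : Prop :=
  ∀ p ∈ S, ∃ U ∈ 𝓝 p, ∀ y, (p.1, y) ∈ S ∩ U → f p.1 y = f p.1 p.2 → y = p.2

def twistFiber (f : X → Y → Z) (S : Set (X × Y)) (p : X × Y) : Set Y :=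
  {y | (p.1, y) ∈ S ∧ f p.1 y = f p.1 p.2}

theorem IsCompact.preimage_prodMk [T1Space X] {S : Set (X × Y)} (hS : IsCompact S) (x : X) :
    IsCompact (Prod.mk x ⁻¹' S) := by
  have hrange : range (Prod.mk x : Y → X × Y) = {x} ×ˢ univ := by
    ext ⟨a, b⟩
    simp [eq_comm]
  exact (isInducing_prodMkRight x).isCompact_preimage
    (hrange ▸ isClosed_singleton.prod isClosed_univ) hS

theorem IsCompact.twistFiber [T1Space X] [TopologicalSpace Z] [T1Space Z] {S : Set (X × Y)}
    (hS : IsCompact S) {f : X → Y → Z} (hf : ∀ x, Continuous (f x)) (p : X × Y) :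
    IsCompact (twistFiber f S p) :=
  (hS.preimage_prodMk p.1).inter_right (isClosed_singleton.preimage (hf p.1))

theorem LocallyTwistedOn.isDiscrete_twistFiber {f : X → Y → Z} {S : Set (X × Y)}
    (htwist : LocallyTwistedOn f S) (p : X × Y) : IsDiscrete (twistFiber f S p) := by
  refine isDiscrete_iff_nhdsWithin.2 fun y hy => le_antisymm ?_ (pure_le_nhdsWithin hy)
  obtain ⟨U, hU, hUtwist⟩ := htwist (p.1, y) hy.1
  have hV : Prod.mk p.1 ⁻¹' U ∈ 𝓝 y := (Continuous.prodMk_right p.1).continuousAt hU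
  rw [le_pure_iff]
  filter_upwards [mem_nhdsWithin_of_mem_nhds hV, self_mem_nhdsWithin] with y' hy'U hy'
  exact hUtwist y' ⟨hy'.1, hy'U⟩ (hy'.2.trans hy.2.symm)

theorem LocallyTwistedOn.finite_twistFiber [T1Space X] [TopologicalSpace Z] [T1Space Z]
    {f : X → Y → Z} {S : Set (X × Y)} (htwist : LocallyTwistedOn f S) (hS : IsCompact S)
    (hf : ∀ x, Continuous (f x)) (p : X × Y) : (twistFiber f S p).Finite :=
  (hS.twistFiber hf p).finite (htwist.isDiscrete_twistFiber p)

end Twist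

theorem stmt_0_general {d n : ℕ} {Y : Fin n → Type*}
    [∀ i, MetricSpace (Y i)]
    (D₁c : EuclideanSpace ℝ (Fin d) → (∀ i, Y i) → (EuclideanSpace ℝ (Fin d) →L[ℝ] ℝ))
    (hD₁cont : Continuous fun p : EuclideanSpace ℝ (Fin d) × (∀ i, Y i) => D₁c p.1 p.2)
    (S : Set (EuclideanSpace ℝ (Fin d) × (∀ i, Y i)))
    (hS : IsCompact S)
    -- `c` is locally 1-twisted on `S`:
    (htwist : ∀ p ∈ S, ∃ U ∈ nhds p, ∀ y, (p.1, y) ∈ S ∩ U →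
      D₁c p.1 y = D₁c p.1 p.2 → y = p.2) :
    ∀ p ∈ S, {y : ∀ i, Y i | (p.1, y) ∈ S ∧ D₁c p.1 y = D₁c p.1 p.2}.Finite :=
  fun p _ => LocallyTwistedOn.finite_twistFiber htwist hS
    (fun x => hD₁cont.comp (Continuous.prodMk_right x)) p

/-- For a cost `c` continuously differentiable in its first variable
(`X₁` a compact subset of `ℝᵈ`, the remaining marginal spaces `Y i` compact metric),
if `S` is a compact `c`-splitting set and `c` is locally `1`-twisted on `S`, then
for every point of `S` the level set of `D₁ c` within `S` over the same first
coordinate is finite. -/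
theorem stmt_0 {d n : ℕ} {Y : Fin n → Type*}
    [∀ i, MetricSpace (Y i)] [∀ i, CompactSpace (Y i)]
    [∀ i, MeasurableSpace (Y i)] [∀ i, BorelSpace (Y i)]
    (X₁ : Set (EuclideanSpace ℝ (Fin d))) (hX₁ : IsCompact X₁)
    (c : EuclideanSpace ℝ (Fin d) → (∀ i, Y i) → ℝ)
    (hc : Continuous fun p : EuclideanSpace ℝ (Fin d) × (∀ i, Y i) => c p.1 p.2)
    (D₁c : EuclideanSpace ℝ (Fin d) → (∀ i, Y i) → (EuclideanSpace ℝ (Fin d) →L[ℝ] ℝ))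
    (hD : ∀ x y, HasFDerivAt (fun x' => c x' y) (D₁c x y) x)
    (hD₁cont : Continuous fun p : EuclideanSpace ℝ (Fin d) × (∀ i, Y i) => D₁c p.1 p.2)
    (S : Set (EuclideanSpace ℝ (Fin d) × (∀ i, Y i)))
    (hS : IsCompact S) (hSX : ∀ p ∈ S, p.1 ∈ X₁)
    -- `S` is a `c`-splitting set:
    (u₀ : EuclideanSpace ℝ (Fin d) → ℝ) (u : ∀ i, Y i → ℝ)
    (hu₀ : Measurable u₀) (hu : ∀ i, Measurable (u i))
    (hsplit_le : ∀ x y, u₀ x + ∑ i, u i (y i) ≤ c x y)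
    (hsplit_eq : ∀ p ∈ S, u₀ p.1 + ∑ i, u i (p.2 i) = c p.1 p.2)
    -- `c` is locally 1-twisted on `S`:
    (htwist : ∀ p ∈ S, ∃ U ∈ nhds p, ∀ y, (p.1, y) ∈ S ∩ U →
      D₁c p.1 y = D₁c p.1 p.2 → y = p.2) :
    ∀ p ∈ S, {y : ∀ i, Y i | (p.1, y) ∈ S ∧ D₁c p.1 y = D₁c p.1 p.2}.Finite :=
  stmt_0_general D₁c hD₁cont S hS htwist
end

section
/- Let X₁ be a Polish space with a non-atomic Borel probability measure μ₁, and let Y be a Polish space with γ a Borel probability measure on X₁ × Y whose first marginal is μ₁. Then there exists a Borel measurable bijection (mod null sets) T = (T₁, T₂) : X₁ → X₁ × Y which is a measure-space isomorphism from (X₁, μ₁) onto (X₁ × Y, γ); moreover T₁ pushes μ₁ forward to μ₁ and T₂ pushes μ₁ forward to the second marginal of γ. -/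
/-!
A non-atomic Borel probability measure on a standard Borel space `Z` is isomorphic mod 0 to
Lebesgue measure on `(0, 1)`: embed `Z` into `ℝ`; the cdf `F` of the image measure is then
continuous, so `F (F⁻¹ p) = p` on `(0, 1)` for the quantile function `F⁻¹`, and the pair
`(F, F⁻¹)` is the isomorphism. The measure `γ` has no atoms because its first marginal `μ₁` has
none, so `(X₁, μ₁)` and `(X₁ × Y, γ)` are both isomorphic to `(0, 1)`, hence to each other, and
`T₁`, `T₂` are the two coordinates of this isomorphism.
-/

open MeasureTheory Set Filter Topology ProbabilityTheory

namespace MeasureTheory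

variable {α β δ : Type*} [MeasurableSpace α] [MeasurableSpace β] [MeasurableSpace δ]
  {μ : Measure α} {ν : Measure β} {ρ : Measure δ} {f : α → β} {g : β → α}

structure IsModNullIso (μ : Measure α) (ν : Measure β) (f : α → β) (g : β → α) : Prop where
  measurePreserving : MeasurePreserving f μ ν
  measurable_inv : Measurable g
  ae_left_inv : ∀ᵐ x ∂μ, g (f x) = x
  ae_right_inv : ∀ᵐ y ∂ν, f (g y) = y

namespace IsModNullIso

lemma symm (h : IsModNullIso μ ν f g) : IsModNullIso ν μ g f where
  measurePreserving := by
    refine ⟨h.measurable_inv, ?_⟩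
    rw [← h.measurePreserving.map_eq,
      Measure.map_map h.measurable_inv h.measurePreserving.measurable,
      Measure.map_congr (f := g ∘ f) (g := id) h.ae_left_inv, Measure.map_id]
  measurable_inv := h.measurePreserving.measurable
  ae_left_inv := h.ae_right_inv
  ae_right_inv := h.ae_left_inv

lemma trans {f' : β → δ} {g' : δ → β} (h : IsModNullIso μ ν f g)
    (h' : IsModNullIso ν ρ f' g') : IsModNullIso μ ρ (f' ∘ f) (g ∘ g') where
  measurePreserving := h'.measurePreserving.comp h.measurePreserving
  measurable_inv := h.measurable_inv.comp h'.measurable_inv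
  ae_left_inv := by
    filter_upwards [h.measurePreserving.quasiMeasurePreserving.ae h'.ae_left_inv,
      h.ae_left_inv] with x hx hx'
    simp only [Function.comp_apply, hx, hx']
  ae_right_inv := by
    filter_upwards [h'.symm.measurePreserving.quasiMeasurePreserving.ae h.ae_right_inv,
      h'.ae_right_inv] with z hz hz'
    simp only [Function.comp_apply, hz, hz']

lemma of_map_eq [MeasurableEq β] (hf : Measurable f) (hg : Measurable g)
    (hmap : μ.map f = ν) (hinv : ∀ᵐ x ∂μ, g (f x) = x) : IsModNullIso μ ν f g where
  measurePreserving := ⟨hf, hmap⟩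
  measurable_inv := hg
  ae_left_inv := hinv
  ae_right_inv := by
    rw [← hmap, ae_map_iff hf.aemeasurable (measurableSet_eq_fun (f := fun y => f (g y))
      (g := fun y => y) (hf.comp hg) measurable_id)]
    filter_upwards [hinv] with x hx
    rw [hx]

end IsModNullIso

lemma _root_.MeasurableEmbedding.exists_isModNullIso_map [Nonempty α] [MeasurableEq β]
    {e : α → β} (he : MeasurableEmbedding e) (μ : Measure α) :
    ∃ g, IsModNullIso μ (μ.map e) e g := by
  obtain ⟨g, hg, hge⟩ := he.exists_measurable_extend measurable_id fun _ => ‹Nonempty α›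
  exact ⟨g, .of_map_eq he.measurable hg rfl (ae_of_all _ (congr_fun hge))⟩

lemma _root_.MeasurableEmbedding.nullSingletonClass_map {e : α → β}
    (he : MeasurableEmbedding e) (μ : Measure α) [NullSingletonClass μ] :
    NullSingletonClass (μ.map e) :=
  ⟨fun y => by
    rw [he.map_apply]
    exact (subsingleton_singleton.preimage he.injective).measure_zero μ⟩

lemma nullSingletonClass_of_map [MeasurableSingletonClass β] (hf : Measurable f)
    [NullSingletonClass (μ.map f)] : NullSingletonClass μ :=
  ⟨fun x => measure_mono_null (show {x} ⊆ f ⁻¹' {f x} from singleton_subset_iff.2 rfl)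
    (by rw [← Measure.map_apply hf (measurableSet_singleton (f x))]; exact measure_singleton _)⟩

end MeasureTheory

lemma Real.volume_restrict_Ioo_zero_one_Iic {c : ℝ} (hc : c ∈ Icc 0 1) :
    volume.restrict (Ioo 0 1) (Iic c) = ENNReal.ofReal c := by
  rw [Measure.restrict_apply measurableSet_Iic,
    measure_congr ((ae_eq_refl (Iic c)).inter Ioo_ae_eq_Ioc), Iic_inter_Ioc_of_le hc.2,
    Real.volume_Ioc, sub_zero]

namespace ProbabilityTheory

variable {ν : Measure ℝ} {p : ℝ}

lemma continuous_cdf [IsProbabilityMeasure ν] [NullSingletonClass ν] : Continuous (cdf ν) := by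
  refine continuous_iff_continuousAt.2 fun x =>
    continuousAt_iff_continuous_left_right.2 ⟨?_, (cdf ν).right_continuous x⟩
  rw [← continuousWithinAt_Iio_iff_Iic, (monotone_cdf ν).continuousWithinAt_Iio_iff_leftLim_eq]
  have hjump := (cdf ν).measure_singleton x
  rw [measure_cdf, measure_singleton, eq_comm, ENNReal.ofReal_eq_zero, sub_nonpos] at hjump
  exact le_antisymm ((monotone_cdf ν).leftLim_le le_rfl) hjump

/-- The generalized inverse of the cdf; only its values on `(0, 1)` are meaningful. -/
noncomputable def quantile (ν : Measure ℝ) (p : ℝ) : ℝ := sInf {x | p ≤ cdf ν x}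

lemma quantile_le_iff (hp : p ∈ Ioo 0 1) (x : ℝ) : quantile ν p ≤ x ↔ p ≤ cdf ν x := by
  have hne : {x | p ≤ cdf ν x}.Nonempty :=
    ((tendsto_cdf_atTop ν).eventually_const_le hp.2).exists
  obtain ⟨x₀, hx₀⟩ := ((tendsto_cdf_atBot ν).eventually_lt_const hp.1).exists
  have hbdd : BddBelow {x | p ≤ cdf ν x} := ⟨x₀, fun y hy =>
    le_of_not_gt fun hyx => (hy.trans (monotone_cdf ν hyx.le)).not_gt hx₀⟩
  refine ⟨fun hx => ?_, fun hx => csInf_le hbdd hx⟩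
  suffices hmem : p ≤ cdf ν (quantile ν p) from hmem.trans (monotone_cdf ν hx)
  refine ge_of_tendsto (((cdf ν).right_continuous _).mono Ioi_subset_Ici_self).tendsto ?_
  filter_upwards [self_mem_nhdsWithin] with y hy
  obtain ⟨z, hz, hzy⟩ := exists_lt_of_csInf_lt hne hy
  exact hz.trans (monotone_cdf ν hzy.le)

lemma cdf_quantile [IsProbabilityMeasure ν] [NullSingletonClass ν] (hp : p ∈ Ioo 0 1) :
    cdf ν (quantile ν p) = p := by
  obtain ⟨a, ha⟩ := ((tendsto_cdf_atBot ν).eventually_lt_const hp.1).exists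
  obtain ⟨b, hb⟩ := ((tendsto_cdf_atTop ν).eventually_const_lt hp.2).exists
  obtain ⟨x, hx⟩ := intermediate_value_univ a b continuous_cdf ⟨ha.le, hb.le⟩
  refine le_antisymm ?_ ((quantile_le_iff hp _).1 le_rfl)
  calc cdf ν (quantile ν p) ≤ cdf ν x := monotone_cdf ν ((quantile_le_iff hp x).2 hx.ge)
    _ = p := hx

lemma monotoneOn_quantile : MonotoneOn (quantile ν) (Ioo 0 1) := fun _ hp _ hq hpq =>
  (quantile_le_iff hp _).2 (hpq.trans ((quantile_le_iff hq _).1 le_rfl))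

lemma aemeasurable_quantile : AEMeasurable (quantile ν) (volume.restrict (Ioo 0 1)) :=
  aemeasurable_restrict_of_monotoneOn measurableSet_Ioo monotoneOn_quantile

lemma map_quantile [IsProbabilityMeasure ν] :
    (volume.restrict (Ioo 0 1)).map (quantile ν) = ν := by
  refine (Measure.ext_of_Iic ν _ fun x => ?_).symm
  have hpre : quantile ν ⁻¹' Iic x ∩ Ioo 0 1 = Iic (cdf ν x) ∩ Ioo 0 1 := by
    ext p
    simp only [mem_inter_iff, mem_preimage, mem_Iic, and_congr_left_iff]
    exact fun hp => quantile_le_iff hp x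
  rw [Measure.map_apply_of_aemeasurable aemeasurable_quantile measurableSet_Iic,
    Measure.restrict_apply' measurableSet_Ioo, hpre, ← Measure.restrict_apply measurableSet_Iic,
    Real.volume_restrict_Ioo_zero_one_Iic ⟨cdf_nonneg ν x, cdf_le_one ν x⟩, ofReal_cdf]

lemma exists_isModNullIso_cdf [IsProbabilityMeasure ν] [NullSingletonClass ν] :
    ∃ Q, IsModNullIso ν (volume.restrict (Ioo 0 1)) (cdf ν) Q := by
  have hQ := aemeasurable_quantile (ν := ν)
  refine ⟨hQ.mk,
    (IsModNullIso.of_map_eq hQ.measurable_mk (monotone_cdf ν).measurable ?_ ?_).symm⟩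
  · rw [← Measure.map_congr hQ.ae_eq_mk, map_quantile]
  · filter_upwards [hQ.ae_eq_mk, ae_restrict_mem measurableSet_Ioo] with p hp hp01
    rw [← hp, cdf_quantile hp01]

end ProbabilityTheory

lemma exists_isModNullIso_Ioo {Z : Type*} [MeasurableSpace Z] [StandardBorelSpace Z]
    (μ : Measure Z) [IsProbabilityMeasure μ] [NullSingletonClass μ] :
    ∃ f g, IsModNullIso μ (volume.restrict (Ioo (0 : ℝ) 1)) f g := by
  have := nonempty_of_isProbabilityMeasure μ
  have he := measurableEmbedding_embeddingReal Z
  have := he.nullSingletonClass_map μ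
  have := Measure.isProbabilityMeasure_map (μ := μ) he.measurable.aemeasurable
  obtain ⟨g, hg⟩ := he.exists_isModNullIso_map μ
  obtain ⟨Q, hQ⟩ := exists_isModNullIso_cdf (ν := μ.map (embeddingReal Z))
  exact ⟨_, _, hg.trans hQ⟩

/-- If `μ₁` is a non-atomic Borel probability measure on a Polish space `X₁`
and `γ` is a Borel probability measure on `X₁ × Y` (with `Y` Polish) whose first marginal
is `μ₁`, then there is a measure-space isomorphism (a Borel bijection mod null sets)
`T = (T₁, T₂) : X₁ → X₁ × Y` pushing `μ₁` to `γ`; moreover `T₁` pushes `μ₁` to `μ₁`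
and `T₂` pushes `μ₁` to the second marginal of `γ`. -/
theorem stmt_2 {X₁ Y : Type*}
    [MetricSpace X₁] [PolishSpace X₁] [MeasurableSpace X₁] [BorelSpace X₁]
    [MetricSpace Y] [PolishSpace Y] [MeasurableSpace Y] [BorelSpace Y]
    (μ₁ : Measure X₁) [IsProbabilityMeasure μ₁] (hna : ∀ x : X₁, μ₁ {x} = 0)
    (γ : Measure (X₁ × Y)) [IsProbabilityMeasure γ]
    (hmarg : Measure.map Prod.fst γ = μ₁) :
    ∃ (T₁ : X₁ → X₁) (T₂ : X₁ → Y) (F : X₁ × Y → X₁),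
      Measurable T₁ ∧ Measurable T₂ ∧ Measurable F ∧
      Measure.map (fun x => (T₁ x, T₂ x)) μ₁ = γ ∧
      (∀ᵐ x ∂μ₁, F (T₁ x, T₂ x) = x) ∧
      (∀ᵐ p ∂γ, (T₁ (F p), T₂ (F p)) = p) ∧
      Measure.map T₁ μ₁ = μ₁ ∧
      Measure.map T₂ μ₁ = Measure.map Prod.snd γ := by
  have : NullSingletonClass μ₁ := ⟨hna⟩
  have : NullSingletonClass (γ.map Prod.fst) := hmarg ▸ this
  have := nullSingletonClass_of_map (μ := γ) measurable_fst
  obtain ⟨f₁, g₁, h₁⟩ := exists_isModNullIso_Ioo μ₁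
  obtain ⟨f₂, g₂, h₂⟩ := exists_isModNullIso_Ioo γ
  obtain ⟨hT, hF, hFT, hTF⟩ := h₁.trans h₂.symm
  refine ⟨Prod.fst ∘ g₂ ∘ f₁, Prod.snd ∘ g₂ ∘ f₁, g₁ ∘ f₂, measurable_fst.comp hT.measurable,
    measurable_snd.comp hT.measurable, hF, hT.map_eq, hFT, hTF, ?_, ?_⟩
  · exact ((MeasurePreserving.mk measurable_fst hmarg).comp hT).map_eq
  · exact ((MeasurePreserving.mk measurable_snd rfl).comp hT).map_eq
end

section
/- Let (Y, Σ, ν) be a probability space, X a Hausdorff topological space with a Radon probability measure λ, and T : X → Y a surjective Borel-to-Σ measurable map with T_#λ = ν. Suppose Σ is countably separated. If there exists a Σ_ν-to-Borel measurable section F : Y → X of T (i.e., T ∘ F = id_Y) with λ = F_#ν, then λ is an extreme point of the convex set M(T, ν) = {ρ Radon probability on X : T_#ρ = ν}. -/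
/-!
Since `T ∘ F = id`, for Borel `B` the set `B ∆ T⁻¹C` has `F`-preimage `F⁻¹B ∆ C`; choosing `C`
measurable with `F⁻¹B =ᵐ[ν] C`, this preimage is `ν`-null, so `B =ᵐ[λ] T⁻¹C`.
Hence every measure `μ ≪ λ` with `T_#μ = ν` satisfies `μ B = μ (T⁻¹C) = ν C = λ B`,
so `λ` is the only such measure, and both `λ₁` and `λ₂` are such measures
when `λ = θ λ₁ + (1 - θ) λ₂`.
-/

open MeasureTheory Set

namespace MeasureTheory.Measure

variable {X Y : Type*} [MeasurableSpace X] [MeasurableSpace Y]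

lemma absolutelyContinuous_of_nnreal_smul_le {μ lam : Measure X} {c : NNReal} (hc : c ≠ 0)
    (h : c • μ ≤ lam) : μ ≪ lam :=
  (absolutelyContinuous_smul (ENNReal.coe_ne_zero.2 hc)).trans (absolutelyContinuous_of_le h)

variable {ν : Measure Y} {lam : Measure X} {T : X → Y} {F : Y → X}

lemma ae_eq_preimage_of_map_section (hT : Measurable T) (hFsec : ∀ y, T (F y) = y)
    (hFpush : ∀ B : Set X, MeasurableSet B → lam B = ν (F ⁻¹' B))
    {B : Set X} (hB : MeasurableSet B) {C : Set Y} (hC : MeasurableSet C)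
    (hBC : F ⁻¹' B =ᵐ[ν] C) : B =ᵐ[lam] T ⁻¹' C := by
  have hFT : F ⁻¹' (T ⁻¹' C) = C := by
    ext y
    rw [mem_preimage, mem_preimage, hFsec]
  rw [← measure_symmDiff_eq_zero_iff, hFpush _ (hB.symmDiff (hT hC)), preimage_symmDiff, hFT]
  exact measure_symmDiff_eq_zero_iff.2 hBC

lemma eq_of_absolutelyContinuous_of_map_section (hT : Measurable T) (hFsec : ∀ y, T (F y) = y)
    (hFmeas : ∀ B : Set X, MeasurableSet B → NullMeasurableSet (F ⁻¹' B) ν)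
    (hFpush : ∀ B : Set X, MeasurableSet B → lam B = ν (F ⁻¹' B))
    {μ : Measure X} (hμ : μ ≪ lam) (hμT : μ.map T = ν) : μ = lam := by
  ext B hB
  obtain ⟨C, -, hC, hCB⟩ := (hFmeas B hB).exists_measurable_subset_ae_eq
  have hBC := ae_eq_preimage_of_map_section hT hFsec hFpush hB hC hCB.symm
  calc μ B = μ (T ⁻¹' C) := measure_congr (hμ.ae_eq hBC)
    _ = ν C := by rw [← hμT, map_apply hT hC]
    _ = lam B := by rw [hFpush B hB, measure_congr hCB]

end MeasureTheory.Measure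

theorem stmt_3_general {X Y : Type*} [TopologicalSpace X]
    [MeasurableSpace X] [MeasurableSpace Y]
    (ν : Measure Y)
    (lam : Measure X)
    (T : X → Y) (hT : Measurable T)
    -- a `Σ_ν`-to-Borel measurable section `F` of `T` with `lam = F₃ν`:
    (F : Y → X)
    (hFmeas : ∀ B : Set X, MeasurableSet B → NullMeasurableSet (F ⁻¹' B) ν)
    (hFsec : ∀ y, T (F y) = y)
    (hFpush : ∀ B : Set X, MeasurableSet B → lam B = ν (F ⁻¹' B)) :
    -- `lam` is an extreme point of `M(T, ν)`:
    ∀ (θ : NNReal), 0 < θ → θ < 1 →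
      ∀ lam₁ lam₂ : Measure X,
        (IsProbabilityMeasure lam₁ ∧ lam₁.InnerRegular ∧ Measure.map T lam₁ = ν) →
        (IsProbabilityMeasure lam₂ ∧ lam₂.InnerRegular ∧ Measure.map T lam₂ = ν) →
        lam = θ • lam₁ + (1 - θ : NNReal) • lam₂ → lam₁ = lam₂ := by
  rintro θ hθ0 hθ1 lam₁ lam₂ ⟨-, -, h₁T⟩ ⟨-, -, h₂T⟩ hlam
  have h₁ : lam₁ ≪ lam :=
    Measure.absolutelyContinuous_of_nnreal_smul_le hθ0.ne' (hlam ▸ Measure.le_add_right le_rfl)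
  have h₂ : lam₂ ≪ lam :=
    Measure.absolutelyContinuous_of_nnreal_smul_le (tsub_pos_of_lt hθ1).ne'
      (hlam ▸ Measure.le_add_left le_rfl)
  rw [Measure.eq_of_absolutelyContinuous_of_map_section hT hFsec hFmeas hFpush h₁ h₁T,
    Measure.eq_of_absolutelyContinuous_of_map_section hT hFsec hFmeas hFpush h₂ h₂T]

/-- Graf, one direction: if a `Σ_ν`-to-Borel measurable section `F` of `T`
pushes `ν` to `λ`, then `λ` is an extreme point of `M(T, ν)`, the convex set of Radon
probability measures on `X` pushed by `T` to `ν`.  Here `Σ` is countably separated,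
`X` is Hausdorff and `lam` is a Radon (inner regular, finite) probability measure. -/
theorem stmt_3 {X Y : Type*} [TopologicalSpace X] [T2Space X]
    [MeasurableSpace X] [BorelSpace X] [MeasurableSpace Y]
    (ν : Measure Y) [IsProbabilityMeasure ν]
    (lam : Measure X) [IsProbabilityMeasure lam] [lam.InnerRegular]
    (T : X → Y) (hT : Measurable T) (hTsurj : Function.Surjective T)
    (hTν : Measure.map T lam = ν)
    -- `Σ` is countably separated:
    (hsep : ∃ s : ℕ → Set Y, (∀ n, MeasurableSet (s n)) ∧
      ∀ y₁ y₂ : Y, (∀ n, y₁ ∈ s n ↔ y₂ ∈ s n) → y₁ = y₂)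
    -- a `Σ_ν`-to-Borel measurable section `F` of `T` with `lam = F₃ν`:
    (F : Y → X)
    (hFmeas : ∀ B : Set X, MeasurableSet B → NullMeasurableSet (F ⁻¹' B) ν)
    (hFsec : ∀ y, T (F y) = y)
    (hFpush : ∀ B : Set X, MeasurableSet B → lam B = ν (F ⁻¹' B)) :
    -- `lam` is an extreme point of `M(T, ν)`:
    ∀ (θ : NNReal), 0 < θ → θ < 1 →
      ∀ lam₁ lam₂ : Measure X,
        (IsProbabilityMeasure lam₁ ∧ lam₁.InnerRegular ∧ Measure.map T lam₁ = ν) →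
        (IsProbabilityMeasure lam₂ ∧ lam₂.InnerRegular ∧ Measure.map T lam₂ = ν) →
        lam = θ • lam₁ + (1 - θ : NNReal) • lam₂ → lam₁ = lam₂ :=
  stmt_3_general ν lam T hT F hFmeas hFsec hFpush
end

section
/- Let (X, 𝓑, μ) be a probability space and ρ₁,...,ρ_k probability measures on X such that μ is absolutely continuous with respect to ρ := Σᵢ₌₁^k ρᵢ with Radon–Nikodym density α = dμ/dρ. Suppose T₁ : X → X satisfies T₁_#μ = μ and Fᵢ are sections of T₁ with ρᵢ = (Fᵢ)_#μ. Then, setting αᵢ = α ∘ Fᵢ, one has Σᵢ₌₁^k αᵢ(x) = 1 for μ-almost every x ∈ X. -/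
/-!
Since `Fᵢ⁻¹ (T₁⁻¹ t) = t`, for every measurable `t` the change of variables along the sections gives
`∫_t Σᵢ α ∘ Fᵢ dμ = ∫_{T₁⁻¹ t} α dρ = μ (T₁⁻¹ t) = μ t = ∫_t 1 dμ`, and two functions with equal
integrals over all measurable sets agree almost everywhere.
-/

open MeasureTheory

section Sections

variable {X : Type*} [MeasurableSpace X]

theorem setLIntegral_comp_of_leftInverse (μ : Measure X) {T F : X → X} (hT : Measurable T)
    (hF : Measurable F) (hsec : Function.LeftInverse T F) {g : X → ENNReal} (hg : Measurable g)
    {t : Set X} (ht : MeasurableSet t) :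
    ∫⁻ x in t, g (F x) ∂μ = ∫⁻ y in T ⁻¹' t, g y ∂(μ.map F) := by
  have hpre : F ⁻¹' (T ⁻¹' t) = t := by
    ext x
    simp [hsec x]
  rw [Measure.restrict_map hF (hT ht), lintegral_map hg hF, hpre]

theorem setLIntegral_sum_comp_sections {ι : Type*} [Fintype ι] {μ : Measure X} {T : X → X}
    (hT : MeasurePreserving T μ μ) {F : ι → X → X} (hF : ∀ i, Measurable (F i))
    (hsec : ∀ i, Function.LeftInverse T (F i)) {α : X → ENNReal} (hα : Measurable α)
    (hdens : μ = (∑ i, μ.map (F i)).withDensity α) {t : Set X} (ht : MeasurableSet t) :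
    ∫⁻ x in t, ∑ i, α (F i x) ∂μ = μ t := by
  have hTt : MeasurableSet (T ⁻¹' t) := hT.measurable ht
  calc ∫⁻ x in t, ∑ i, α (F i x) ∂μ
      = ∑ i, ∫⁻ y in T ⁻¹' t, α y ∂(μ.map (F i)) := by
        rw [lintegral_finsetSum (f := fun i x => α (F i x)) _ fun i _ => hα.comp (hF i)]
        exact Finset.sum_congr rfl fun i _ =>
          setLIntegral_comp_of_leftInverse μ hT.measurable (hF i) (hsec i) hα ht
    _ = ∫⁻ y in T ⁻¹' t, α y ∂(∑ i, μ.map (F i)) := by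
        simp only [← lintegral_indicator hTt, lintegral_finsetSum_measure]
    _ = μ (T ⁻¹' t) := by rw [← withDensity_apply α hTt, ← hdens]
    _ = μ t := hT.measure_preimage ht.nullMeasurableSet

theorem ae_sum_comp_sections_eq_one {ι : Type*} [Fintype ι] {μ : Measure X} [SigmaFinite μ]
    {T : X → X} (hT : MeasurePreserving T μ μ) {F : ι → X → X} (hF : ∀ i, Measurable (F i))
    (hsec : ∀ i, Function.LeftInverse T (F i)) {α : X → ENNReal} (hα : Measurable α)
    (hdens : μ = (∑ i, μ.map (F i)).withDensity α) :
    ∀ᵐ x ∂μ, ∑ i, α (F i x) = 1 :=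
  ae_eq_of_forall_setLIntegral_eq_of_sigmaFinite
    (Finset.measurable_sum _ fun i _ => hα.comp (hF i)) measurable_const fun t ht _ => by
      rw [setLIntegral_sum_comp_sections hT hF hsec hα hdens ht, setLIntegral_one]

end Sections

theorem stmt_9_general {X : Type*} [MeasurableSpace X]
    (μ : Measure X) [IsProbabilityMeasure μ]
    (k : ℕ) (ρ : Fin k → Measure X)
    (α : X → ENNReal) (hα : Measurable α)
    (hdens : μ = (∑ i : Fin k, ρ i).withDensity α)
    (T₁ : X → X) (hT₁ : Measurable T₁) (hT₁μ : Measure.map T₁ μ = μ)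
    (F : Fin k → X → X) (hFmeas : ∀ i, Measurable (F i))
    (hFsec : ∀ i x, T₁ (F i x) = x)
    (hFpush : ∀ i, ρ i = Measure.map (F i) μ) :
    ∀ᵐ x ∂μ, ∑ i : Fin k, α (F i x) = 1 := by
  simp only [hFpush] at hdens
  exact ae_sum_comp_sections_eq_one ⟨hT₁, hT₁μ⟩ hFmeas hFsec hα hdens

/-- if `μ = ρ.withDensity α` where `ρ = ∑ ρᵢ`, `ρᵢ = (Fᵢ)₃μ` for sections
`Fᵢ` of a `μ`-preserving map `T₁`, then `∑ i, α (Fᵢ x) = 1` for `μ`-a.e. `x`. -/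
theorem stmt_9 {X : Type*} [MeasurableSpace X]
    (μ : Measure X) [IsProbabilityMeasure μ]
    (k : ℕ) (ρ : Fin k → Measure X) (hρ : ∀ i, IsProbabilityMeasure (ρ i))
    (α : X → ENNReal) (hα : Measurable α)
    (hac : μ ≪ ∑ i : Fin k, ρ i)
    (hdens : μ = (∑ i : Fin k, ρ i).withDensity α)
    (T₁ : X → X) (hT₁ : Measurable T₁) (hT₁μ : Measure.map T₁ μ = μ)
    (F : Fin k → X → X) (hFmeas : ∀ i, Measurable (F i))
    (hFsec : ∀ i x, T₁ (F i x) = x)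
    (hFpush : ∀ i, ρ i = Measure.map (F i) μ) :
    ∀ᵐ x ∂μ, ∑ i : Fin k, α (F i x) = 1 :=
  stmt_9_general μ k ρ α hα hdens T₁ hT₁ hT₁μ F hFmeas hFsec hFpush
end

section
/- Let X₁, Y be Polish spaces, μ₁ a Borel probability measure on X₁, and γ a probability measure on X₁ × Y with first marginal μ₁. Suppose T = (T₁, G) : X₁ → X₁ × Y pushes μ₁ forward to γ, and suppose F₁,...,F_k : X₁ → X₁ are sections of T₁ with ρᵢ = (Fᵢ)_#μ₁, μ ≪ Σρᵢ with density α, and αᵢ = α ∘ Fᵢ. Let Gᵢ = G ∘ Fᵢ : X₁ → Y. Then for every bounded continuous f : X₁ × Y → ℝ, ∫ f dγ = Σᵢ₌₁^k ∫ αᵢ(x) f(x, Gᵢ(x)) dμ₁(x); that is, γ = Σᵢ₌₁^k αᵢ · (Id × Gᵢ)_#μ₁ where αᵢ acts as a density on the first coordinate. -/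
open MeasureTheory

/-!
Write `μ₁ = α · ∑ i, (F i)₊μ₁`. Pushing a density forward along `F i` turns it into the
density `α ∘ F i` on `μ₁`, so `γ = T₊μ₁ = ∑ i, (T ∘ F i)₊((α ∘ F i) · μ₁)`, and `T ∘ F i = (id, G ∘ F i)`
because `F i` is a section of `T₁`. Each summand is dominated by the probability measure `γ`,
so `α ∘ F i` is `μ₁`-a.e. finite and bounded continuous `f` can be integrated term by term.
-/

theorem withDensity_map {α β : Type*} [MeasurableSpace α] [MeasurableSpace β] {μ : Measure α}
    {f : α → β} (hf : Measurable f) {g : β → ENNReal} (hg : Measurable g) :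
    (μ.map f).withDensity g = (μ.withDensity (g ∘ f)).map f := by
  ext s hs
  rw [withDensity_apply _ hs, setLIntegral_map hs hg hf, Measure.map_apply hf hs,
    withDensity_apply _ (hf hs)]
  rfl

theorem map_eq_sum_map_comp_withDensity {ι α β : Type*} [Fintype ι] [MeasurableSpace α]
    [MeasurableSpace β] {μ : Measure α} {F : ι → α → α} (hF : ∀ i, Measurable (F i))
    {a : α → ENNReal} (ha : Measurable a) (hμ : μ = (∑ i, μ.map (F i)).withDensity a)
    {T : α → β} (hT : Measurable T) :
    μ.map T = ∑ i, (μ.withDensity (a ∘ F i)).map (T ∘ F i) := by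
  conv_lhs => rw [hμ, ← Measure.sum_fintype, withDensity_sum]
  rw [Measure.map_sum hT.aemeasurable, Measure.sum_fintype]
  refine Finset.sum_congr rfl fun i _ => ?_
  rw [withDensity_map (hF i) ha, Measure.map_map hT (hF i)]

theorem integral_map_withDensity {α β E : Type*} [MeasurableSpace α] [MeasurableSpace β]
    [NormedAddCommGroup E] [NormedSpace ℝ E] {μ : Measure α} {φ : α → β} (hφ : Measurable φ)
    {g : α → ENNReal} (hg : Measurable g) [IsFiniteMeasure ((μ.withDensity g).map φ)]
    {f : β → E} (hf : AEStronglyMeasurable f ((μ.withDensity g).map φ)) :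
    ∫ y, f y ∂(μ.withDensity g).map φ = ∫ x, (g x).toReal • f (φ x) ∂μ := by
  have hg_lt_top : ∀ᵐ x ∂μ, g x < ⊤ := by
    have h_univ := measure_ne_top ((μ.withDensity g).map φ) Set.univ
    rw [Measure.map_apply hφ .univ, Set.preimage_univ, withDensity_apply _ .univ,
      Measure.restrict_univ] at h_univ
    exact ae_lt_top hg h_univ
  rw [integral_map hφ.aemeasurable hf, integral_withDensity_eq_integral_toReal_smul hg hg_lt_top]

theorem stmt_10_general {X₁ Y : Type*}
    [MetricSpace X₁] [MeasurableSpace X₁] [BorelSpace X₁]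
    [MetricSpace Y] [PolishSpace Y] [MeasurableSpace Y] [BorelSpace Y]
    (μ₁ : Measure X₁)
    (γ : Measure (X₁ × Y)) [IsProbabilityMeasure γ]
    (T₁ : X₁ → X₁) (G : X₁ → Y) (hT₁ : Measurable T₁) (hG : Measurable G)
    (hpush : Measure.map (fun x => (T₁ x, G x)) μ₁ = γ)
    (k : ℕ) (F : Fin k → X₁ → X₁) (hFmeas : ∀ i, Measurable (F i))
    (hFsec : ∀ i x, T₁ (F i x) = x)
    (ρ : Fin k → Measure X₁) (hρ : ∀ i, ρ i = Measure.map (F i) μ₁)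
    (α : X₁ → ENNReal) (hα : Measurable α)
    (hdens : μ₁ = (∑ i : Fin k, ρ i).withDensity α) :
    (∀ f : X₁ × Y → ℝ, Continuous f → (∃ M, ∀ p, |f p| ≤ M) →
      ∫ p, f p ∂γ =
        ∑ i : Fin k, ∫ x, (α (F i x)).toReal * f (x, G (F i x)) ∂μ₁) ∧
    γ = ∑ i : Fin k,
      Measure.map (fun x => (x, G (F i x)))
        (μ₁.withDensity (fun x => α (F i x))) := by
  simp only [hρ] at hdens
  have hγ : γ = ∑ i, (μ₁.withDensity (α ∘ F i)).map (fun x => (x, G (F i x))) := by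
    rw [← hpush, map_eq_sum_map_comp_withDensity hFmeas hα hdens (hT₁.prodMk hG)]
    simp only [Function.comp_def, hFsec]
  refine ⟨fun f hf ⟨M, hM⟩ => ?_, hγ⟩
  have hfin : ∀ i, IsFiniteMeasure ((μ₁.withDensity (α ∘ F i)).map fun x => (x, G (F i x))) :=
    fun i => isFiniteMeasure_of_le γ <| by
      rw [hγ, ← Measure.sum_fintype]
      exact Measure.le_sum _ i
  rw [hγ, integral_finsetSum_measure fun i _ => (integrable_const M).mono'
    hf.aestronglyMeasurable (.of_forall hM)]
  refine Finset.sum_congr rfl fun i _ => ?_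
  exact integral_map_withDensity (φ := fun x => (x, G (F i x))) (by fun_prop)
    (hα.comp (hFmeas i)) hf.aestronglyMeasurable

/-- decomposition of a coupling `γ = T₃μ₁` (with `T = (T₁, G)`) into a
sum `γ = ∑ i, αᵢ · (Id × Gᵢ)₃μ₁` along sections `Fᵢ` of `T₁`, where `Gᵢ = G ∘ Fᵢ` and
`αᵢ = α ∘ Fᵢ` for the density `α` of `μ₁` w.r.t. `∑ (Fᵢ)₃μ₁`.  Equivalently, for every
bounded continuous `f`, `∫ f dγ = ∑ i ∫ αᵢ(x) f(x, Gᵢ x) dμ₁`. -/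
theorem stmt_10 {X₁ Y : Type*}
    [MetricSpace X₁] [PolishSpace X₁] [MeasurableSpace X₁] [BorelSpace X₁]
    [MetricSpace Y] [PolishSpace Y] [MeasurableSpace Y] [BorelSpace Y]
    (μ₁ : Measure X₁) [IsProbabilityMeasure μ₁]
    (γ : Measure (X₁ × Y)) [IsProbabilityMeasure γ]
    (hmarg : Measure.map Prod.fst γ = μ₁)
    (T₁ : X₁ → X₁) (G : X₁ → Y) (hT₁ : Measurable T₁) (hG : Measurable G)
    (hpush : Measure.map (fun x => (T₁ x, G x)) μ₁ = γ)
    (k : ℕ) (F : Fin k → X₁ → X₁) (hFmeas : ∀ i, Measurable (F i))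
    (hFsec : ∀ i x, T₁ (F i x) = x)
    (ρ : Fin k → Measure X₁) (hρ : ∀ i, ρ i = Measure.map (F i) μ₁)
    (α : X₁ → ENNReal) (hα : Measurable α)
    (hac : μ₁ ≪ ∑ i : Fin k, ρ i)
    (hdens : μ₁ = (∑ i : Fin k, ρ i).withDensity α) :
    (∀ f : X₁ × Y → ℝ, Continuous f → (∃ M, ∀ p, |f p| ≤ M) →
      ∫ p, f p ∂γ =
        ∑ i : Fin k, ∫ x, (α (F i x)).toReal * f (x, G (F i x)) ∂μ₁) ∧
    γ = ∑ i : Fin k,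
      Measure.map (fun x => (x, G (F i x)))
        (μ₁.withDensity (fun x => α (F i x))) :=
  stmt_10_general μ₁ γ T₁ G hT₁ hG hpush k F hFmeas hFsec ρ hρ α hα hdens
end

section
/- Let X, Y be Polish (complete separable metric) spaces, ν a Borel probability measure on Y, T : X → Y a surjective Borel measurable map, and λ a Borel probability measure on X with T_#λ = ν. Then there exists a probability measure ξ on the σ-algebra over ext M(T,ν) generated by the evaluation maps ρ ↦ ρ(B) (B Borel in X), such that for every Borel set B ⊆ X, λ(B) = ∫_{ext M(T,ν)} ρ(B) dξ(ρ), and each map ρ ↦ ρ(B) is ξ-measurable. -/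
open MeasureTheory

variable {X Y : Type*} [MeasurableSpace X] [MeasurableSpace Y]

/-- The convex set `M(T, ν)` of Borel probability measures pushed by `T` to `ν`. -/
def MTν (T : X → Y) (ν : Measure Y) : Set (Measure X) :=
  {ρ : Measure X | IsProbabilityMeasure ρ ∧ Measure.map T ρ = ν}

/-- The set of extreme points of `M(T, ν)`. -/
def extMTν (T : X → Y) (ν : Measure Y) : Set (Measure X) :=
  {ρ ∈ MTν T ν | ∀ θ : NNReal, 0 < θ → θ < 1 →
    ∀ ρ₁ ∈ MTν T ν, ∀ ρ₂ ∈ MTν T ν,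
      ρ = θ • ρ₁ + (1 - θ : NNReal) • ρ₂ → ρ₁ = ρ₂}

/-- The σ-algebra on a set `K` of measures generated by the evaluations `ρ ↦ ρ B`,
`B` measurable. -/
def evalSigma (K : Set (Measure X)) : MeasurableSpace K :=
  ⨆ (B : Set X) (_ : MeasurableSet B),
    MeasurableSpace.comap (fun ρ : K => (ρ : Measure X) B) inferInstance

/-!
Disintegrate `λ` along `T` and represent the conditional kernel `y ↦ κ y` as the image of the
uniform measure on `[0, 1]` under a jointly measurable map `f y u`. For almost every `u`,
`y ↦ f y u` is a `ν`-a.e. section of `T`, and the image of `ν` under a section `s` is an extreme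
point of `M(T, ν)`: a `ρ ∈ M(T, ν)` with `ρ ≪ s_#ν` lives on the graph `{x | s (T x) = x}`,
so `ρ = (s ∘ T)_#ρ = s_#ν`. Averaging these extreme points over `u` recovers `λ`.
-/

open ProbabilityTheory unitInterval Function

section Extreme

variable {T : X → Y} {ν : Measure Y}

lemma mem_extMTν_of_forall_absolutelyContinuous {ρ : Measure X} (hρ : ρ ∈ MTν T ν)
    (h : ∀ ρ' ∈ MTν T ν, ρ' ≪ ρ → ρ' = ρ) : ρ ∈ extMTν T ν := by
  refine ⟨hρ, fun θ hθ₀ hθ₁ ρ₁ h₁ ρ₂ h₂ hρ_eq => ?_⟩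
  have hac₁ : ρ₁ ≪ ρ := hρ_eq ▸
    ((Measure.absolutelyContinuous_smul (ENNReal.coe_ne_zero.2 hθ₀.ne')).add_right _)
  have hac₂ : ρ₂ ≪ ρ := hρ_eq ▸
    ((Measure.absolutelyContinuous_smul
      (ENNReal.coe_ne_zero.2 (tsub_pos_of_lt hθ₁).ne')).add_right' _)
  rw [h ρ₁ h₁ hac₁, h ρ₂ h₂ hac₂]

variable {s : Y → X}

lemma map_mem_MTν [IsProbabilityMeasure ν] (hT : Measurable T) (hs : Measurable s)
    (hsT : ∀ᵐ y ∂ν, T (s y) = y) : ν.map s ∈ MTν T ν := by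
  refine ⟨Measure.isProbabilityMeasure_map hs.aemeasurable, ?_⟩
  rw [Measure.map_map hT hs, Measure.map_congr (f := T ∘ s) (g := id) hsT,
    Measure.map_id]

lemma eq_map_of_absolutelyContinuous [MeasurableEq X] (hT : Measurable T) (hs : Measurable s)
    (hsT : ∀ᵐ y ∂ν, T (s y) = y) {ρ : Measure X} (hρ : ρ.map T = ν) (hρs : ρ ≪ ν.map s) :
    ρ = ν.map s := by
  have h_retract : s ∘ T =ᵐ[ν.map s] id :=
    (ae_map_iff hs.aemeasurable (measurableSet_eq_fun (hs.comp hT) measurable_id)).2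
      (hsT.mono fun _ hy => congrArg s hy)
  calc ρ = ρ.map id := Measure.map_id.symm
    _ = ρ.map (s ∘ T) := Measure.map_congr (hρs.ae_eq h_retract).symm
    _ = ν.map s := by rw [← Measure.map_map hs hT, hρ]

lemma map_mem_extMTν [MeasurableEq X] [IsProbabilityMeasure ν] (hT : Measurable T)
    (hs : Measurable s) (hsT : ∀ᵐ y ∂ν, T (s y) = y) : ν.map s ∈ extMTν T ν :=
  mem_extMTν_of_forall_absolutelyContinuous (map_mem_MTν hT hs hsT) fun _ hρ hρs =>
    eq_map_of_absolutelyContinuous hT hs hsT hρ.2 hρs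

end Extreme

section Sections

lemma compProd_eq_map_prod {Ω : Type*} [MeasurableSpace Ω] {P : Measure Ω} [SFinite P]
    {ν : Measure Y} [SFinite ν] {κ : Kernel Y X} [IsSFiniteKernel κ] {f : Y → Ω → X}
    (hf : Measurable (uncurry f)) (hfκ : ∀ y, P.map (f y) = κ y) :
    ν ⊗ₘ κ = (P.prod ν).map (fun p => (p.2, f p.2 p.1)) := by
  have hF : Measurable (fun p : Ω × Y => (p.2, f p.2 p.1)) :=
    measurable_snd.prodMk (hf.comp measurable_swap)
  ext D hD
  rw [Measure.compProd_apply hD, Measure.map_apply hF hD, Measure.prod_apply_symm (hF hD)]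
  refine lintegral_congr fun y => ?_
  rw [← hfκ y, Measure.map_apply (f := f y) (hf.comp measurable_prodMk_left)
    (measurable_prodMk_left hD)]
  rfl

lemma measurableSet_setOf_ae_section {Ω : Type*} [MeasurableSpace Ω] [MeasurableEq Y]
    {T : X → Y} (hT : Measurable T) {ν : Measure Y} [SFinite ν] {f : Y → Ω → X}
    (hf : Measurable (uncurry f)) : MeasurableSet {ω | ∀ᵐ y ∂ν, T (f y ω) = y} := by
  simp_rw [ae_iff]
  exact measurable_measure_prodMk_left (measurableSet_eq_fun
    (hT.comp (hf.comp measurable_swap)) measurable_snd).compl (measurableSet_singleton 0)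

variable [StandardBorelSpace X] [Nonempty X] {T : X → Y}

lemma exists_map_graph_eq_map_prod (hT : Measurable T) (lam : Measure X)
    [IsProbabilityMeasure lam] :
    ∃ f : Y → I → X, Measurable (uncurry f) ∧
      lam.map (fun x => (T x, x)) =
        (volume.prod (lam.map T)).map (fun p => (p.2, f p.2 p.1)) := by
  set μ := lam.map (fun x => (T x, x))
  have : IsProbabilityMeasure μ :=
    Measure.isProbabilityMeasure_map (hT.prodMk measurable_id).aemeasurable
  obtain ⟨f, hf, hfκ⟩ := Kernel.exists_measurable_map_eq_unitInterval μ.condKernel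
  refine ⟨f, hf, ?_⟩
  rw [← compProd_eq_map_prod hf hfκ, ← Measure.fst_map_prodMk measurable_id]
  exact μ.disintegrate μ.condKernel |>.symm

theorem exists_sections_lintegral_eq [MeasurableEq Y] (hT : Measurable T) (lam : Measure X)
    [IsProbabilityMeasure lam] :
    ∃ s : I → Y → X, Measurable (uncurry s) ∧ (∀ u, ∀ᵐ y ∂lam.map T, T (s u y) = y) ∧
      ∀ B, MeasurableSet B → lam B = ∫⁻ u, (lam.map T).map (s u) B := by
  classical
  obtain ⟨f, hf, h_graph⟩ := exists_map_graph_eq_map_prod hT lam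
  set ν := lam.map T
  have hG : Measurable fun x => (T x, x) := by fun_prop
  have hF : Measurable (fun p : I × Y => (p.2, f p.2 p.1)) :=
    measurable_snd.prodMk (hf.comp measurable_swap)
  have h_ae : ∀ᵐ u : I, ∀ᵐ y ∂ν, T (f y u) = y := by
    have h : ∀ᵐ q ∂lam.map (fun x => (T x, x)), T q.2 = q.1 :=
      (ae_map_iff hG.aemeasurable
        (measurableSet_eq_fun (hT.comp measurable_snd) measurable_fst)).2 (ae_of_all _ fun _ => rfl)
    rw [h_graph] at h
    exact Measure.ae_ae_of_ae_prod (ae_of_ae_map hF.aemeasurable h)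
  have h_lintegral : ∀ B, MeasurableSet B → lam B = ∫⁻ u, ν {y | f y u ∈ B} := by
    intro B hB
    calc lam B = lam.map (fun x => (T x, x)) (Prod.snd ⁻¹' B) := by
          rw [Measure.map_apply hG (measurable_snd hB)]; rfl
      _ = ∫⁻ u, ν {y | f y u ∈ B} := by
          rw [h_graph, Measure.map_apply hF (measurable_snd hB),
            Measure.prod_apply (hF (measurable_snd hB))]
          rfl
  set U := {u | ∀ᵐ y ∂ν, T (f y u) = y}
  have hU : MeasurableSet U := measurableSet_setOf_ae_section hT hf
  obtain ⟨u₀, hu₀⟩ := h_ae.exists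
  set r : I → I := fun u => if u ∈ U then u else u₀
  have hr_mem : ∀ u, r u ∈ U := fun u => by
    unfold r; split_ifs with hu
    exacts [hu, hu₀]
  have hr : Measurable r := Measurable.ite hU measurable_id measurable_const
  refine ⟨fun u y => f y (r u), hf.comp (measurable_snd.prodMk (hr.comp measurable_fst)),
    hr_mem, fun B hB => ?_⟩
  rw [h_lintegral B hB]
  refine lintegral_congr_ae (h_ae.mono fun u hu => ?_)
  have hru : r u = u := if_pos hu
  simp only [hru]
  rw [Measure.map_apply (f := (f · u)) (hf.comp measurable_prodMk_right) hB]
  rfl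

end Sections

lemma measurable_map_of_measurable_uncurry {Ω : Type*} [MeasurableSpace Ω] {ν : Measure Y}
    [SFinite ν] {s : Ω → Y → X} (hs : Measurable (uncurry s)) :
    Measurable fun ω => ν.map (s ω) := by
  refine Measure.measurable_of_measurable_coe _ fun B hB => ?_
  have h_apply : ∀ ω, ν.map (s ω) B = ν (Prod.mk ω ⁻¹' (uncurry s ⁻¹' B)) := fun ω =>
    Measure.map_apply (hs.comp measurable_prodMk_left) hB
  simp_rw [h_apply]
  exact measurable_measure_prodMk_left (hs hB)

lemma evalSigma_eq_subtype (K : Set (Measure X)) : evalSigma K = Subtype.instMeasurableSpace := by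
  simp only [evalSigma, Subtype.instMeasurableSpace, Measure.instMeasurableSpace,
    MeasurableSpace.comap_iSup, MeasurableSpace.comap_comp]
  rfl

theorem stmt_12_general {X Y : Type*}
    [MetricSpace X] [PolishSpace X] [MeasurableSpace X] [BorelSpace X]
    [MetricSpace Y] [PolishSpace Y] [MeasurableSpace Y] [BorelSpace Y]
    (ν : Measure Y) [IsProbabilityMeasure ν]
    (T : X → Y) (hT : Measurable T)
    (lam : Measure X) [IsProbabilityMeasure lam]
    (hlam : Measure.map T lam = ν) :
    ∃ ξ : @Measure (extMTν T ν) (evalSigma _),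
      @IsProbabilityMeasure _ (evalSigma _) ξ ∧
      (∀ B : Set X, MeasurableSet B →
        @Measurable (extMTν T ν) ENNReal (evalSigma _) _
          (fun ρ => (ρ : Measure X) B)) ∧
      ∀ B : Set X, MeasurableSet B →
        lam B = @lintegral _ (evalSigma _) ξ (fun ρ => (ρ : Measure X) B) := by
  have : Nonempty X := nonempty_of_isProbabilityMeasure lam
  obtain ⟨s, hs, hsT, hlam_eq⟩ := exists_sections_lintegral_eq hT lam
  subst hlam
  let Φ : I → extMTν T (lam.map T) := fun u =>
    ⟨(lam.map T).map (s u), map_mem_extMTν hT (hs.comp measurable_prodMk_left) (hsT u)⟩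
  have hΦ : Measurable Φ := (measurable_map_of_measurable_uncurry hs).subtype_mk
  have h_eval : ∀ B, MeasurableSet B →
      Measurable fun ρ : extMTν T (lam.map T) => (ρ : Measure X) B := fun B hB =>
    (Measure.measurable_coe hB).comp measurable_subtype_coe
  rw [evalSigma_eq_subtype]
  refine ⟨volume.map Φ, Measure.isProbabilityMeasure_map hΦ.aemeasurable, h_eval,
    fun B hB => ?_⟩
  rw [lintegral_map (h_eval B hB) hΦ]
  exact hlam_eq B hB

/-- Choquet-type representation: every `λ ∈ M(T, ν)` is a barycenter of
a probability measure `ξ` on the extreme points of `M(T, ν)`. -/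
theorem stmt_12 {X Y : Type*}
    [MetricSpace X] [PolishSpace X] [MeasurableSpace X] [BorelSpace X]
    [MetricSpace Y] [PolishSpace Y] [MeasurableSpace Y] [BorelSpace Y]
    (ν : Measure Y) [IsProbabilityMeasure ν]
    (T : X → Y) (hT : Measurable T) (hTsurj : Function.Surjective T)
    (lam : Measure X) [IsProbabilityMeasure lam]
    (hlam : Measure.map T lam = ν) :
    ∃ ξ : @Measure (extMTν T ν) (evalSigma _),
      @IsProbabilityMeasure _ (evalSigma _) ξ ∧
      (∀ B : Set X, MeasurableSet B →
        @Measurable (extMTν T ν) ENNReal (evalSigma _) _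
          (fun ρ => (ρ : Measure X) B)) ∧
      ∀ B : Set X, MeasurableSet B →
        lam B = @lintegral _ (evalSigma _) ξ (fun ρ => (ρ : Measure X) B) :=
  stmt_12_general ν T hT lam hlam
end

section
/- Let X₁ ⊆ ℝᵈ compact and X₂,...,Xₙ Polish, μ₁,...,μₙ Borel probability measures with μ₁ non-atomic, and let c be a bounded continuous cost, differentiable in x₁ everywhere, satisfying the m-twist condition on c-splitting sets. Assume the Kantorovich dual problem admits a solution (φ₁,...,φₙ) with φ₁ differentiable μ₁-a.e., Σφᵢ(xᵢ) ≤ c everywhere, and ∫c dγ = Σ∫φᵢ dμᵢ for an optimal plan γ. Then there exist k ≤ m, nonnegative measurable functions α₁,...,α_k on X₁ with Σαᵢ = 1 μ₁-a.e., and Borel maps G₁,...,G_k : X₁ → X₂ × ⋯ × Xₙ such that γ = Σᵢ₌₁^k αᵢ (Id × Gᵢ)_#μ₁. -/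
/-!
Integrating the dual inequality `φ₀ x + ∑ φᵢ yᵢ ≤ c x y` against `γ` and comparing with the
dual equality shows that `γ` is carried by the contact set `S` where equality holds. If `φ₀` is
differentiable at `x`, then `x` maximises `φ₀ - c(·, y)` for every `y` in the fibre `S_x`, so
`D₁c x y = Dφ₀ x` on the whole fibre and the `m`-twist condition leaves at most `m` points in it.
Disintegrating `γ = μ₁ ⊗ κ`, almost every `κ x` is therefore a combination of at most `m` Dirac
masses. To choose these atoms measurably in `x`, embed the target space into `(0, ∞)` and list
the atoms in increasing order: the atom following `b` is `sInf {t | 0 < ν (b, t]}`, and whether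
it is `< a` is decided by countably many rational `t`.
-/

open MeasureTheory Set ProbabilityTheory

open scoped ENNReal

namespace MeasureTheory.Measure

noncomputable def nextAtom (ν : Measure ℝ) (b : ℝ) : ℝ :=
  if 0 < ν (Ioi b) then sInf {t | 0 < ν (Ioc b t)} else b

variable {ν : Measure ℝ} {a b : ℝ}

theorem nextAtom_of_measure_Ioi_eq_zero (h : ν (Ioi b) = 0) : ν.nextAtom b = b := by
  simp [nextAtom, h]

theorem nextAtom_eq (hab : b < a) (hIoo : ν (Ioo b a) = 0) (ha : ν {a} ≠ 0) :
    ν.nextAtom b = a := by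
  have hpos : ∀ t, a ≤ t → 0 < ν (Ioc b t) := fun t hat =>
    (pos_iff_ne_zero.mpr ha).trans_le (measure_mono (by simpa using ⟨hab, hat⟩))
  have hset : {t | 0 < ν (Ioc b t)} = Ici a := by
    refine Subset.antisymm (fun t ht => ?_) hpos
    by_contra hta
    exact ht.ne' (measure_mono_null (Ioc_subset_Ioo_right (not_le.mp hta)) hIoo)
  rw [nextAtom, if_pos ((hpos a le_rfl).trans_le (measure_mono Ioc_subset_Ioi_self)), hset,
    csInf_Ici]

theorem restrict_Ioc_eq_smul_dirac (hab : b < a) (hIoo : ν (Ioo b a) = 0) :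
    ν.restrict (Ioc b a) = ν (Ioc b a) • dirac a := by
  have hae : Ioc b a =ᵐ[ν] ({a} : Set ℝ) := by
    refine ae_eq_set.mpr ⟨by rwa [Ioc_sdiff_right], ?_⟩
    rw [sdiff_eq_empty.mpr (singleton_subset_iff.mpr (show a ∈ Ioc b a from ⟨hab, le_rfl⟩)),
      measure_empty]
  rw [restrict_congr_set hae, restrict_singleton, measure_congr hae]

theorem restrict_Ioi_eq_sum_smul_dirac_nextAtom {F : Finset ℝ} (hF : ∀ᵐ t ∂ν, t ∈ F)
    (hpos : ∀ t ∈ F, ν {t} ≠ 0) (m : ℕ) (b : ℝ) (hm : (F.filter (b < ·)).card ≤ m) :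
    ν.restrict (Ioi b) = ∑ k : Fin m,
      ν (Ioc (ν.nextAtom^[k] b) (ν.nextAtom^[k + 1] b)) • dirac (ν.nextAtom^[k + 1] b) := by
  have hempty : ∀ m b, ¬(F.filter (b < ·)).Nonempty → ν.restrict (Ioi b) = ∑ k : Fin m,
      ν (Ioc (ν.nextAtom^[k] b) (ν.nextAtom^[k + 1] b)) • dirac (ν.nextAtom^[k + 1] b) := by
    intro m b hne
    have hIoi : ν (Ioi b) = 0 := by
      rw [measure_eq_zero_iff_ae_notMem]
      filter_upwards [hF] with t ht hbt
      exact hne ⟨t, Finset.mem_filter.mpr ⟨ht, hbt⟩⟩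
    have hfix : ∀ k, ν.nextAtom^[k] b = b :=
      Function.iterate_fixed (nextAtom_of_measure_Ioi_eq_zero hIoi)
    simp [hfix, restrict_eq_zero.mpr hIoi]
  induction m generalizing b with
  | zero => exact hempty 0 b fun hne => (Finset.card_pos.mpr hne).ne' (by omega)
  | succ m ih =>
    by_cases hne : (F.filter (b < ·)).Nonempty
    swap
    · exact hempty _ b hne
    set a := (F.filter (b < ·)).min' hne
    obtain ⟨haF, hba⟩ : a ∈ F ∧ b < a := Finset.mem_filter.mp (Finset.min'_mem _ _)
    have hIoo : ν (Ioo b a) = 0 := by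
      rw [measure_eq_zero_iff_ae_notMem]
      filter_upwards [hF] with t ht ⟨hbt, hta⟩
      exact (Finset.min'_le _ t (Finset.mem_filter.mpr ⟨ht, hbt⟩)).not_gt hta
    have hnext : ν.nextAtom b = a := nextAtom_eq hba hIoo (hpos a haF)
    have hcard : (F.filter (a < ·)).card ≤ m := by
      have : F.filter (a < ·) ⊂ F.filter (b < ·) :=
        Finset.ssubset_iff_of_subset (Finset.monotone_filter_right _ fun t _ h => hba.trans h)
          |>.mpr ⟨a, Finset.mem_filter.mpr ⟨haF, hba⟩, by simp⟩
      have := Finset.card_lt_card this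
      omega
    rw [← Ioc_union_Ioi_eq_Ioi hba.le, restrict_union Ioc_disjoint_Ioi_same measurableSet_Ioi,
      restrict_Ioc_eq_smul_dirac hba hIoo, ih a hcard, Fin.sum_univ_succ]
    simp only [Fin.val_zero, Fin.val_succ, Function.iterate_succ_apply, hnext]
    rfl

theorem eq_sum_smul_dirac_nextAtom {F : Set ℝ} (hF : F.Finite) {m : ℕ} (hFm : F.ncard ≤ m)
    (hFν : ∀ᵐ t ∂ν, t ∈ F) (hb : ν (Iic b) = 0) :
    ν = ∑ k : Fin m,
      ν (Ioc (ν.nextAtom^[k] b) (ν.nextAtom^[k + 1] b)) • dirac (ν.nextAtom^[k + 1] b) := by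
  classical
  set F' := hF.toFinset.filter (ν {·} ≠ 0)
  have hF' : ∀ᵐ t ∂ν, t ∈ F' := by
    have hatom : ∀ᵐ t ∂ν, t ∈ F → ν {t} ≠ 0 := by
      rw [ae_iff]
      simp only [Classical.not_imp, not_not]
      exact (measure_null_iff_singleton (hF.subset fun t ht => ht.1).countable).mpr
        fun t ht => ht.2
    filter_upwards [hFν, hatom] with t ht h
    simpa [F'] using ⟨ht, h ht⟩
  have hcard : (F'.filter (b < ·)).card ≤ m := calc
    _ ≤ hF.toFinset.card := (Finset.card_filter_le _ _).trans (Finset.card_filter_le _ _)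
    _ ≤ m := by rwa [← Set.ncard_eq_toFinset_card F hF]
  have hIoi : ∀ᵐ t ∂ν, t ∈ Ioi b := by
    filter_upwards [measure_eq_zero_iff_ae_notMem.mp hb] with t ht
    simpa using ht
  rw [← restrict_Ioi_eq_sum_smul_dirac_nextAtom hF' (fun t ht => (Finset.mem_filter.mp ht).2) m b hcard,
    restrict_eq_self_of_ae_mem hIoi]

variable {α Y : Type*} [MeasurableSpace α] [MeasurableSpace Y]

theorem compProd_eq_sum_map_withDensity {μ : Measure α} [SFinite μ] {κ : Kernel α Y}
    [IsSFiniteKernel κ] {ι : Type*} [Fintype ι] {w : ι → α → ℝ≥0∞} {G : ι → α → Y}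
    (hw : ∀ i, Measurable (w i)) (hG : ∀ i, Measurable (G i))
    (h : ∀ᵐ x ∂μ, κ x = ∑ i, w i x • dirac (G i x)) :
    μ ⊗ₘ κ = ∑ i, (μ.withDensity (w i)).map fun x => (x, G i x) := by
  ext s hs
  have hGm : ∀ i, Measurable fun x => (x, G i x) := fun i => measurable_id.prodMk (hG i)
  have hGs : ∀ i, MeasurableSet ((fun x => (x, G i x)) ⁻¹' s) := fun i => hGm i hs
  have hmap : ∀ i, ((μ.withDensity (w i)).map fun x => (x, G i x)) s =
      ∫⁻ x, ((fun x => (x, G i x)) ⁻¹' s).indicator (w i) x ∂μ := fun i => by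
    rw [map_apply (hGm i) hs, withDensity_apply _ (hGs i),
      lintegral_indicator (hGs i)]
  simp_rw [compProd_apply hs, finsetSum_apply, hmap]
  rw [← lintegral_finsetSum _ fun i _ => (hw i).indicator (hGs i)]
  refine lintegral_congr_ae ?_
  filter_upwards [h] with x hx
  rw [hx, finsetSum_apply]
  refine Finset.sum_congr rfl fun i _ => ?_
  rw [smul_apply, dirac_apply' _ (measurable_prodMk_left hs)]
  by_cases hxs : (x, G i x) ∈ s <;> simp [hxs]

end MeasureTheory.Measure

theorem measurable_sInf_setOf {α : Type*} [MeasurableSpace α] {P : α → ℝ → Prop}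
    (hP : ∀ q : ℚ, MeasurableSet {x | P x q})
    (hup : ∀ x, IsUpperSet {t | P x t}) (hbdd : ∀ x, BddBelow {t | P x t}) :
    Measurable fun x => sInf {t | P x t} := by
  refine measurable_of_Iio fun a => ?_
  have key : ∀ x, sInf {t | P x t} < a ↔
      (∃ q : ℚ, (q : ℝ) < a ∧ P x q) ∨ ((∀ q : ℚ, ¬P x q) ∧ 0 < a) := by
    intro x
    rcases {t | P x t}.eq_empty_or_nonempty with h | ⟨t, ht⟩
    · have hno : ∀ q : ℚ, ¬P x q := fun q hq => h.subset hq
      rw [h, Real.sInf_empty]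
      simp [hno]
    · obtain ⟨q₀, hq₀⟩ := exists_rat_gt t
      have hyes : P x q₀ := hup x hq₀.le ht
      rw [csInf_lt_iff (hbdd x) ⟨t, ht⟩]
      constructor
      · rintro ⟨s, hs, hsa⟩
        obtain ⟨q, hsq, hqa⟩ := exists_rat_btwn hsa
        exact Or.inl ⟨q, hqa, hup x hsq.le hs⟩
      · rintro (⟨q, hqa, hq⟩ | ⟨hno, -⟩)
        · exact ⟨q, hq, hqa⟩
        · exact absurd hyes (hno q₀)
  have hpre : (fun x => sInf {t | P x t}) ⁻¹' Iio a =
      (⋃ q : ℚ, {x | (q : ℝ) < a ∧ P x q}) ∪ ((⋂ q : ℚ, {x | ¬P x q}) ∩ {_x | 0 < a}) := by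
    ext x
    simp [key]
  rw [hpre]
  exact .union (.iUnion fun q => (MeasurableSet.const _).inter (hP q))
    ((MeasurableSet.iInter fun q => (hP q).compl).inter (.const _))

namespace ProbabilityTheory.Kernel

variable {α Y : Type*} [MeasurableSpace α] [MeasurableSpace Y]

section Real

variable (η : Kernel α ℝ) [IsSFiniteKernel η]

theorem measurable_apply_Ioi {g : α → ℝ} (hg : Measurable g) :
    Measurable fun x => η x (Ioi (g x)) :=
  η.measurable_kernel_prodMk_left (t := {p | g p.1 < p.2})
    (measurableSet_lt (hg.comp measurable_fst) measurable_snd)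

theorem measurable_apply_Ioc {f g : α → ℝ} (hf : Measurable f) (hg : Measurable g) :
    Measurable fun x => η x (Ioc (f x) (g x)) :=
  η.measurable_kernel_prodMk_left (t := {p | f p.1 < p.2 ∧ p.2 ≤ g p.1})
    ((measurableSet_lt (hf.comp measurable_fst) measurable_snd).inter
      (measurableSet_le measurable_snd (hg.comp measurable_fst)))

theorem measurable_nextAtom {g : α → ℝ} (hg : Measurable g) :
    Measurable fun x => (η x).nextAtom (g x) := by
  have hbdd : ∀ x, BddBelow {t | 0 < η x (Ioc (g x) t)} := fun x =>
    ⟨g x, fun t ht => (nonempty_Ioc.mp (nonempty_of_measure_ne_zero ht.ne')).le⟩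
  refine Measurable.ite (measurableSet_lt measurable_const (η.measurable_apply_Ioi hg)) ?_ hg
  exact measurable_sInf_setOf
    (fun q => measurableSet_lt measurable_const (η.measurable_apply_Ioc hg measurable_const))
    (fun x s t hst hs => hs.trans_le (measure_mono (Ioc_subset_Ioc_right hst))) hbdd

theorem measurable_iterate_nextAtom (b : ℝ) (k : ℕ) :
    Measurable fun x => (η x).nextAtom^[k] b := by
  induction k with
  | zero => exact measurable_const
  | succ k ih =>
    simp only [Function.iterate_succ_apply']
    exact η.measurable_nextAtom ih

end Real

theorem exists_ae_eq_sum_smul_dirac [StandardBorelSpace Y] [Nonempty Y] {μ : Measure α}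
    (κ : Kernel α Y) [IsSFiniteKernel κ] {m : ℕ}
    (h : ∀ᵐ x ∂μ, ∃ T : Set Y, T.Finite ∧ T.ncard ≤ m ∧ ∀ᵐ y ∂κ x, y ∈ T) :
    ∃ (w : Fin m → α → ℝ≥0∞) (G : Fin m → α → Y), (∀ k, Measurable (w k)) ∧
      (∀ k, Measurable (G k)) ∧ ∀ᵐ x ∂μ, κ x = ∑ k, w k x • Measure.dirac (G k x) := by
  obtain ⟨e₀, he₀⟩ := exists_measurableEmbedding_real Y
  -- composing with `exp` makes every `κ x` live on `(0, ∞)`, so enumeration can start at `0`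
  set e : Y → ℝ := fun y => Real.exp (e₀ y)
  have he : MeasurableEmbedding e := (Real.measurable_exp.comp he₀.measurable).measurableEmbedding
    (Real.exp_injective.comp he₀.injective)
  obtain ⟨g, hg, hge⟩ := he.exists_measurable_extend measurable_id fun _ => inferInstance
  set η := κ.map e
  have hη : ∀ x, η x = (κ x).map e := κ.map_apply he.measurable
  set r : ℕ → α → ℝ := fun k x => (η x).nextAtom^[k] 0
  have hr : ∀ k, Measurable (r k) := η.measurable_iterate_nextAtom 0
  refine ⟨fun k x => η x (Ioc (r k x) (r (k + 1) x)), fun k x => g (r (k + 1) x),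
    fun k => η.measurable_apply_Ioc (hr k) (hr (k + 1)), fun k => hg.comp (hr (k + 1)), ?_⟩
  filter_upwards [h] with x ⟨T, hT, hTm, hTκ⟩
  have hηT : ∀ᵐ t ∂η x, t ∈ e '' T := by
    rw [hη, he.ae_map_iff]
    exact hTκ.mono fun y hy => mem_image_of_mem e hy
  have hη0 : η x (Iic 0) = 0 := by
    rw [hη, Measure.map_apply he.measurable measurableSet_Iic]
    convert measure_empty (μ := κ x)
    exact eq_empty_of_forall_notMem fun y hy => (Real.exp_pos (e₀ y)).not_ge hy
  have hκη : κ x = (η x).map g := by rw [hη, Measure.map_map hg he.measurable, hge, Measure.map_id]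
  rw [hκη]
  conv_lhs =>
    rw [Measure.eq_sum_smul_dirac_nextAtom (hT.image e) ((ncard_image_le hT).trans hTm) hηT hη0]
  rw [Measure.map_finset_sum hg.aemeasurable]
  simp only [Measure.map_smul, Measure.map_dirac' hg]
  rfl

theorem exists_compProd_eq_sum_map_withDensity [StandardBorelSpace Y] [Nonempty Y]
    {μ : Measure α} [SFinite μ] (κ : Kernel α Y) [IsMarkovKernel κ] {m : ℕ}
    (h : ∀ᵐ x ∂μ, ∃ T : Set Y, T.Finite ∧ T.ncard ≤ m ∧ ∀ᵐ y ∂κ x, y ∈ T) :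
    ∃ (a : Fin m → α → ℝ) (G : Fin m → α → Y), (∀ k, Measurable (a k)) ∧ (∀ k x, 0 ≤ a k x) ∧
      (∀ᵐ x ∂μ, ∑ k, a k x = 1) ∧ (∀ k, Measurable (G k)) ∧
      μ ⊗ₘ κ = ∑ k, (μ.withDensity fun x => ENNReal.ofReal (a k x)).map fun x => (x, G k x) := by
  obtain ⟨w, G, hw, hG, hκ⟩ := κ.exists_ae_eq_sum_smul_dirac h
  have hw1 : ∀ᵐ x ∂μ, ∑ k, w k x = 1 := by
    filter_upwards [hκ] with x hx
    simpa using (congrArg (· univ) hx).symm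
  have hwfin : ∀ᵐ x ∂μ, ∀ k, w k x ≠ ∞ := by
    filter_upwards [hw1] with x hx k
    exact ENNReal.sum_ne_top.mp (hx ▸ ENNReal.one_ne_top) k (Finset.mem_univ k)
  refine ⟨fun k x => (w k x).toReal, G, fun k => (hw k).ennreal_toReal,
    fun _ _ => ENNReal.toReal_nonneg, ?_, hG, ?_⟩
  · filter_upwards [hw1, hwfin] with x hx hfin
    rw [← ENNReal.toReal_sum fun k _ => hfin k, hx, ENNReal.toReal_one]
  · rw [Measure.compProd_eq_sum_map_withDensity hw hG hκ]
    refine Finset.sum_congr rfl fun k _ => ?_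
    rw [MeasureTheory.withDensity_congr_ae (hwfin.mono fun x hx => ENNReal.ofReal_toReal (hx k))]

end ProbabilityTheory.Kernel

theorem HasFDerivAt.eq_of_eventuallyLE_of_eq {E : Type*} [NormedAddCommGroup E]
    [NormedSpace ℝ E] {f g : E → ℝ} {f' g' : E →L[ℝ] ℝ} {x : E} (hf : HasFDerivAt f f' x)
    (hg : HasFDerivAt g g' x) (hle : f ≤ᶠ[nhds x] g) (heq : f x = g x) : f' = g' := by
  have hmax : IsLocalMax (f - g) x := hle.mono fun y hy => by simp [heq, hy]
  exact sub_eq_zero.mp (hmax.hasFDerivAt_eq_zero (hf.sub hg))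

theorem ae_add_sum_eq_of_integral_eq {X ι : Type*} [Fintype ι] {Y : ι → Type*}
    [MeasurableSpace X] [∀ i, MeasurableSpace (Y i)] {γ : Measure (X × ∀ i, Y i)}
    {μ₀ : Measure X} {μ : ∀ i, Measure (Y i)} (hγ₀ : γ.map Prod.fst = μ₀)
    (hγ : ∀ i, γ.map (fun p => p.2 i) = μ i) {c : X → (∀ i, Y i) → ℝ}
    (hc : Integrable (fun p => c p.1 p.2) γ) {φ₀ : X → ℝ} {φ : ∀ i, Y i → ℝ}
    (hφ₀ : Integrable φ₀ μ₀) (hφ : ∀ i, Integrable (φ i) (μ i))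
    (hle : ∀ x y, φ₀ x + ∑ i, φ i (y i) ≤ c x y)
    (heq : ∫ p, c p.1 p.2 ∂γ = ∫ x, φ₀ x ∂μ₀ + ∑ i, ∫ y, φ i y ∂(μ i)) :
    ∀ᵐ p ∂γ, φ₀ p.1 + ∑ i, φ i (p.2 i) = c p.1 p.2 := by
  subst hγ₀
  obtain rfl := funext hγ
  have hcoord : ∀ i, Measurable fun p : X × (∀ i, Y i) => p.2 i :=
    fun i => (measurable_pi_apply i).comp measurable_snd
  have h₀ : Integrable (fun p => φ₀ p.1) γ := hφ₀.comp_measurable measurable_fst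
  have hi : ∀ i, Integrable (fun p => φ i (p.2 i)) γ := fun i => (hφ i).comp_measurable (hcoord i)
  have hsum : Integrable (fun p => ∑ i, φ i (p.2 i)) γ := integrable_finsetSum _ fun i _ => hi i
  refine (integral_eq_iff_of_ae_le (f := fun p => φ₀ p.1 + ∑ i, φ i (p.2 i)) (h₀.add hsum) hc
    (.of_forall fun p => hle p.1 p.2)).mp ?_
  rw [integral_add h₀ hsum, integral_finsetSum _ fun i _ => hi i,
    heq, integral_map measurable_fst.aemeasurable hφ₀.aestronglyMeasurable]
  congr 1
  exact Finset.sum_congr rfl fun i _ =>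
    (integral_map (hcoord i).aemeasurable (hφ i).aestronglyMeasurable).symm

theorem stmt_14_general {d n m : ℕ} {Y : Fin n → Type*}
    [∀ i, MetricSpace (Y i)] [∀ i, PolishSpace (Y i)]
    [∀ i, MeasurableSpace (Y i)] [∀ i, BorelSpace (Y i)]
    (μ₁ : Measure (EuclideanSpace ℝ (Fin d)))
    (μ : ∀ i, Measure (Y i))
    (c : EuclideanSpace ℝ (Fin d) → (∀ i, Y i) → ℝ)
    (hc : Continuous fun p : EuclideanSpace ℝ (Fin d) × (∀ i, Y i) => c p.1 p.2)
    (hcb : ∃ M, ∀ x y, |c x y| ≤ M)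
    (D₁c : EuclideanSpace ℝ (Fin d) → (∀ i, Y i) → (EuclideanSpace ℝ (Fin d) →L[ℝ] ℝ))
    (hD : ∀ x y, HasFDerivAt (fun x' => c x' y) (D₁c x y) x)
    -- the `m`-twist condition on `c`-splitting sets:
    (htwist : ∀ (S : Set (EuclideanSpace ℝ (Fin d) × (∀ i, Y i)))
      (u₀ : EuclideanSpace ℝ (Fin d) → ℝ) (u : ∀ i, Y i → ℝ),
      (∀ x y, u₀ x + ∑ i, u i (y i) ≤ c x y) →
      (∀ p ∈ S, u₀ p.1 + ∑ i, u i (p.2 i) = c p.1 p.2) →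
      ∀ p ∈ S, {y : ∀ i, Y i | (p.1, y) ∈ S ∧ D₁c p.1 y = D₁c p.1 p.2}.Finite ∧
        {y : ∀ i, Y i | (p.1, y) ∈ S ∧ D₁c p.1 y = D₁c p.1 p.2}.ncard ≤ m)
    -- `γ` is an optimal plan:
    (γ : Measure (EuclideanSpace ℝ (Fin d) × (∀ i, Y i))) [IsProbabilityMeasure γ]
    (hγ₁ : Measure.map Prod.fst γ = μ₁)
    (hγ₂ : ∀ i, Measure.map (fun p => p.2 i) γ = μ i)
    -- the Kantorovich dual problem admits a solution `(φ₀, φ)`: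
    (φ₀ : EuclideanSpace ℝ (Fin d) → ℝ) (φ : ∀ i, Y i → ℝ)
    (hφ₀int : Integrable φ₀ μ₁) (hφint : ∀ i, Integrable (φ i) (μ i))
    (hφ₀diff : ∀ᵐ x ∂μ₁, DifferentiableAt ℝ φ₀ x)
    (hdle : ∀ x y, φ₀ x + ∑ i, φ i (y i) ≤ c x y)
    (hdual : ∫ p, c p.1 p.2 ∂γ = ∫ x, φ₀ x ∂μ₁ + ∑ i, ∫ yi, φ i yi ∂(μ i)) :
    ∃ k : ℕ, k ≤ m ∧
      ∃ (α : Fin k → EuclideanSpace ℝ (Fin d) → ℝ)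
        (G : Fin k → EuclideanSpace ℝ (Fin d) → ∀ i, Y i),
        (∀ i, Measurable (α i)) ∧ (∀ i x, 0 ≤ α i x) ∧
        (∀ᵐ x ∂μ₁, ∑ i, α i x = 1) ∧
        (∀ i, Measurable (G i)) ∧
        γ = ∑ i : Fin k,
          Measure.map (fun x => (x, G i x))
            (μ₁.withDensity fun x => ENNReal.ofReal (α i x)) := by
  obtain ⟨M, hM⟩ := hcb
  have : IsFiniteMeasure μ₁ := hγ₁ ▸ inferInstance
  have hcint : Integrable (fun p => c p.1 p.2) γ :=
    .of_bound hc.aestronglyMeasurable M (.of_forall fun p => hM p.1 p.2)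
  have hcontact := ae_add_sum_eq_of_integral_eq hγ₁ hγ₂ hcint hφ₀int hφint hdle hdual
  have hfoc : ∀ {x y}, DifferentiableAt ℝ φ₀ x → φ₀ x + ∑ i, φ i (y i) = c x y →
      D₁c x y = fderiv ℝ φ₀ x := fun hdiff hxy =>
    ((hdiff.hasFDerivAt.add_const _).eq_of_eventuallyLE_of_eq (hD _ _)
      (.of_forall fun x' => hdle x' _) hxy).symm
  have : Nonempty (∀ i, Y i) := (nonempty_of_isProbabilityMeasure γ).map Prod.snd
  have hγκ : μ₁ ⊗ₘ γ.condKernel = γ := hγ₁ ▸ γ.disintegrate γ.condKernel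
  have hfiber : ∀ᵐ x ∂μ₁, ∃ T : Set (∀ i, Y i),
      T.Finite ∧ T.ncard ≤ m ∧ ∀ᵐ y ∂γ.condKernel x, y ∈ T := by
    rw [← hγκ] at hcontact
    filter_upwards [Measure.ae_ae_of_ae_compProd hcontact, hφ₀diff] with x hx hdiff
    obtain ⟨y₀, hy₀⟩ := hx.exists
    obtain ⟨hfin, hcard⟩ := htwist {p | φ₀ p.1 + ∑ i, φ i (p.2 i) = c p.1 p.2} φ₀ φ hdle
      (fun _ hp => hp) (x, y₀) hy₀
    exact ⟨_, hfin, hcard, hx.mono fun y hy => ⟨hy, (hfoc hdiff hy).trans (hfoc hdiff hy₀).symm⟩⟩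
  obtain ⟨α, G, hα, hα0, hα1, hG, hγ⟩ := γ.condKernel.exists_compProd_eq_sum_map_withDensity hfiber
  exact ⟨m, le_rfl, α, G, hα, hα0, hα1, hG, hγκ.symm.trans hγ⟩

/-- main theorem: under the `m`-twist condition on `c`-splitting sets,
with `μ₁` non-atomic and a dual solution `(φ₀, φ)` with `φ₀` differentiable `μ₁`-a.e.,
every optimal plan `γ` decomposes as `γ = ∑_{i<k} αᵢ (Id × Gᵢ)₃μ₁` with `k ≤ m`,
`αᵢ ≥ 0` measurable summing to `1` a.e., and Borel maps `Gᵢ`. -/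
theorem stmt_14 {d n m : ℕ} {Y : Fin n → Type*}
    [∀ i, MetricSpace (Y i)] [∀ i, PolishSpace (Y i)]
    [∀ i, MeasurableSpace (Y i)] [∀ i, BorelSpace (Y i)]
    (X₁ : Set (EuclideanSpace ℝ (Fin d))) (hX₁ : IsCompact X₁)
    (μ₁ : Measure (EuclideanSpace ℝ (Fin d))) [IsProbabilityMeasure μ₁]
    (hμ₁X : μ₁ X₁ = 1) (hna : ∀ x, μ₁ {x} = 0)
    (μ : ∀ i, Measure (Y i)) (hμ : ∀ i, IsProbabilityMeasure (μ i))
    (c : EuclideanSpace ℝ (Fin d) → (∀ i, Y i) → ℝ)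
    (hc : Continuous fun p : EuclideanSpace ℝ (Fin d) × (∀ i, Y i) => c p.1 p.2)
    (hcb : ∃ M, ∀ x y, |c x y| ≤ M)
    (D₁c : EuclideanSpace ℝ (Fin d) → (∀ i, Y i) → (EuclideanSpace ℝ (Fin d) →L[ℝ] ℝ))
    (hD : ∀ x y, HasFDerivAt (fun x' => c x' y) (D₁c x y) x)
    -- the `m`-twist condition on `c`-splitting sets:
    (htwist : ∀ (S : Set (EuclideanSpace ℝ (Fin d) × (∀ i, Y i)))
      (u₀ : EuclideanSpace ℝ (Fin d) → ℝ) (u : ∀ i, Y i → ℝ),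
      (∀ x y, u₀ x + ∑ i, u i (y i) ≤ c x y) →
      (∀ p ∈ S, u₀ p.1 + ∑ i, u i (p.2 i) = c p.1 p.2) →
      ∀ p ∈ S, {y : ∀ i, Y i | (p.1, y) ∈ S ∧ D₁c p.1 y = D₁c p.1 p.2}.Finite ∧
        {y : ∀ i, Y i | (p.1, y) ∈ S ∧ D₁c p.1 y = D₁c p.1 p.2}.ncard ≤ m)
    -- `γ` is an optimal plan:
    (γ : Measure (EuclideanSpace ℝ (Fin d) × (∀ i, Y i))) [IsProbabilityMeasure γ]
    (hγ₁ : Measure.map Prod.fst γ = μ₁)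
    (hγ₂ : ∀ i, Measure.map (fun p => p.2 i) γ = μ i)
    (hopt : ∀ π : Measure (EuclideanSpace ℝ (Fin d) × (∀ i, Y i)),
      IsProbabilityMeasure π → Measure.map Prod.fst π = μ₁ →
      (∀ i, Measure.map (fun p => p.2 i) π = μ i) →
      ∫ p, c p.1 p.2 ∂γ ≤ ∫ p, c p.1 p.2 ∂π)
    -- the Kantorovich dual problem admits a solution `(φ₀, φ)`:
    (φ₀ : EuclideanSpace ℝ (Fin d) → ℝ) (φ : ∀ i, Y i → ℝ)
    (hφ₀m : Measurable φ₀) (hφm : ∀ i, Measurable (φ i))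
    (hφ₀int : Integrable φ₀ μ₁) (hφint : ∀ i, Integrable (φ i) (μ i))
    (hφ₀diff : ∀ᵐ x ∂μ₁, DifferentiableAt ℝ φ₀ x)
    (hdle : ∀ x y, φ₀ x + ∑ i, φ i (y i) ≤ c x y)
    (hdual : ∫ p, c p.1 p.2 ∂γ = ∫ x, φ₀ x ∂μ₁ + ∑ i, ∫ yi, φ i yi ∂(μ i)) :
    ∃ k : ℕ, k ≤ m ∧
      ∃ (α : Fin k → EuclideanSpace ℝ (Fin d) → ℝ)
        (G : Fin k → EuclideanSpace ℝ (Fin d) → ∀ i, Y i),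
        (∀ i, Measurable (α i)) ∧ (∀ i x, 0 ≤ α i x) ∧
        (∀ᵐ x ∂μ₁, ∑ i, α i x = 1) ∧
        (∀ i, Measurable (G i)) ∧
        γ = ∑ i : Fin k,
          Measure.map (fun x => (x, G i x))
            (μ₁.withDensity fun x => ENNReal.ofReal (α i x)) :=
  stmt_14_general μ₁ μ c hc hcb D₁c hD htwist γ hγ₁ hγ₂ φ₀ φ hφ₀int hφint hφ₀diff hdle hdual
end
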